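/- Let X ⊂ ℂ² be a complex domain with flat Kähler structure ω₀ = (i/2)(dz₁∧dz̄₁ + dz₂∧dz̄₂), Ψ₀ = (1/2) dz₁∧dz₂, and let f ∈ C^∞(X) be positive and harmonic with respect to ω₀. Then (Ψ, ω) := (fΨ₀, fω₀) is an SU(2)-structure on X solving the twisted Calabi–Yau equations: dΨ − θ_ω ∧ Ψ = 0, dθ_ω = 0, and dd^c ω = 0, where the Lee form is θ_ω = d log f. -/

import Mathlib

/-!
STATEMENT 8: Let `X ⊂ ℂ²` be a complex domain with flat Kähler structure
`ω₀ = (i/2)(dz₁∧dz̄₁ + dz₂∧dz̄₂)`, `Ψ₀ = (1/2)dz₁∧dz₂`, and `f ∈ C^∞(X)`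
positive and harmonic w.r.t. `ω₀`.  Then `(Ψ, ω) = (fΨ₀, fω₀)` is an
SU(2)-structure solving the twisted Calabi–Yau equations:
`dΨ − θ_ω∧Ψ = 0`, `dθ_ω = 0`, `dd^cω = 0`, with Lee form `θ_ω = d log f`
(characterized by `dω = θ_ω ∧ ω`).

Complex-valued forms on `ℂ²` are encoded by their coefficients in the frame
`dz₁, dz₂, dz̄₁, dz̄₂`:
* 1-forms: index `0 ↦ dz₁, 1 ↦ dz₂, 2 ↦ dz̄₁, 3 ↦ dz̄₂`;
* 2-forms: `0 ↦ dz₁∧dz₂, 1 ↦ dz₁∧dz̄₁, 2 ↦ dz₁∧dz̄₂, 3 ↦ dz₂∧dz̄₁,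
  4 ↦ dz₂∧dz̄₂, 5 ↦ dz̄₁∧dz̄₂`;
* 3-forms: `0 ↦ dz₁∧dz₂∧dz̄₁, 1 ↦ dz₁∧dz₂∧dz̄₂, 2 ↦ dz₁∧dz̄₁∧dz̄₂,
  3 ↦ dz₂∧dz̄₁∧dz̄₂`;
* 4-forms: the single coefficient of `dz₁∧dz₂∧dz̄₁∧dz̄₂`.
-/

open Complex

abbrev SFun := ℂ × ℂ → ℂ

/-- Wirtinger derivatives on `ℂ²`. -/
noncomputable def wr1 (f : SFun) (z : ℂ × ℂ) : ℂ :=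
  (1 / 2) * (fderiv ℝ f z (1, 0) - Complex.I * fderiv ℝ f z (Complex.I, 0))
noncomputable def wr2 (f : SFun) (z : ℂ × ℂ) : ℂ :=
  (1 / 2) * (fderiv ℝ f z (0, 1) - Complex.I * fderiv ℝ f z (0, Complex.I))
noncomputable def wb1 (f : SFun) (z : ℂ × ℂ) : ℂ :=
  (1 / 2) * (fderiv ℝ f z (1, 0) + Complex.I * fderiv ℝ f z (Complex.I, 0))
noncomputable def wb2 (f : SFun) (z : ℂ × ℂ) : ℂ :=
  (1 / 2) * (fderiv ℝ f z (0, 1) + Complex.I * fderiv ℝ f z (0, Complex.I))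

/-- Exterior derivative of a function. -/
noncomputable def extd0 (f : SFun) : Fin 4 → SFun := ![wr1 f, wr2 f, wb1 f, wb2 f]

/-- Exterior derivative of a 1-form. -/
noncomputable def extd1 (α : Fin 4 → SFun) : Fin 6 → SFun :=
  ![fun z => wr1 (α 1) z - wr2 (α 0) z,
    fun z => wr1 (α 2) z - wb1 (α 0) z,
    fun z => wr1 (α 3) z - wb2 (α 0) z,
    fun z => wr2 (α 2) z - wb1 (α 1) z,
    fun z => wr2 (α 3) z - wb2 (α 1) z,
    fun z => wb1 (α 3) z - wb2 (α 2) z]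

/-- Exterior derivative of a 2-form. -/
noncomputable def extd2 (β : Fin 6 → SFun) : Fin 4 → SFun :=
  ![fun z => wb1 (β 0) z - wr2 (β 1) z + wr1 (β 3) z,
    fun z => wb2 (β 0) z - wr2 (β 2) z + wr1 (β 4) z,
    fun z => wr1 (β 5) z + wb2 (β 1) z - wb1 (β 2) z,
    fun z => wr2 (β 5) z + wb2 (β 3) z - wb1 (β 4) z]

/-- Exterior derivative of a 3-form (top coefficient). -/
noncomputable def extd3 (γ : Fin 4 → SFun) : SFun := fun z =>
  -wb2 (γ 0) z + wb1 (γ 1) z - wr2 (γ 2) z + wr1 (γ 3) z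

/-- Wedge product of a 1-form with a 2-form. -/
noncomputable def wedge12 (α : Fin 4 → SFun) (β : Fin 6 → SFun) : Fin 4 → SFun :=
  ![fun z => α 2 z * β 0 z + α 0 z * β 3 z - α 1 z * β 1 z,
    fun z => α 3 z * β 0 z + α 0 z * β 4 z - α 1 z * β 2 z,
    fun z => α 0 z * β 5 z + α 3 z * β 1 z - α 2 z * β 2 z,
    fun z => α 1 z * β 5 z + α 3 z * β 3 z - α 2 z * β 4 z]

/-- Top coefficient of the wedge product of two 2-forms. -/
noncomputable def wedge22 (β γ : Fin 6 → SFun) : SFun := fun z =>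
  β 0 z * γ 5 z + β 5 z * γ 0 z - β 1 z * γ 4 z - β 4 z * γ 1 z
    + β 2 z * γ 3 z + β 3 z * γ 2 z

/-- `d^c = i(∂̄ − ∂)` on 2-forms. -/
noncomputable def dc2 (β : Fin 6 → SFun) : Fin 4 → SFun :=
  ![fun z => Complex.I * (wb1 (β 0) z - (wr1 (β 3) z - wr2 (β 1) z)),
    fun z => Complex.I * (wb2 (β 0) z - (wr1 (β 4) z - wr2 (β 2) z)),
    fun z => Complex.I * ((wb2 (β 1) z - wb1 (β 2) z) - wr1 (β 5) z),
    fun z => Complex.I * ((wb2 (β 3) z - wb1 (β 4) z) - wr2 (β 5) z)]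


/-! ### Auxiliary machinery for the proof -/

/-- A generic "Wirtinger-type" first-order operator. -/
noncomputable def Wop (a b : ℂ × ℂ) (e : ℂ) (g : SFun) : SFun :=
  fun z => (1 / 2) * (fderiv ℝ g z a + e * fderiv ℝ g z b)

lemma wr1_def : wr1 = Wop (1,0) (Complex.I,0) (-Complex.I) := by
  funext g z; simp [wr1, Wop]
  try ring

lemma wr2_def : wr2 = Wop (0,1) (0,Complex.I) (-Complex.I) := by
  funext g z; simp [wr2, Wop]
  try ring

lemma wb1_def : wb1 = Wop (1,0) (Complex.I,0) (Complex.I) := by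
  funext g z; simp [wb1, Wop]
  try ring

lemma wb2_def : wb2 = Wop (0,1) (0,Complex.I) (Complex.I) := by
  funext g z; simp [wb2, Wop]
  try ring

lemma Wop_zero (a b : ℂ × ℂ) (e : ℂ) : Wop a b e (fun _ => 0) = fun _ => 0 := by
  funext z; simp [Wop]

lemma fderiv_app_diff {g : SFun} {z : ℂ × ℂ} (hg : ContDiffAt ℝ 2 g z) (u : ℂ × ℂ) :
    DifferentiableAt ℝ (fun w => fderiv ℝ g w u) z := by
  have hd : DifferentiableAt ℝ (fderiv ℝ g) z :=
    (hg.fderiv_right (m := 1) (le_refl 2)).differentiableAt one_ne_zero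
  exact (ContinuousLinearMap.apply ℝ ℂ u).differentiable.differentiableAt.comp z hd

lemma swap2 {g : SFun} {z : ℂ × ℂ} (hg : ContDiffAt ℝ 2 g z) (u v : ℂ × ℂ) :
    fderiv ℝ (fun w => fderiv ℝ g w u) z v = fderiv ℝ (fun w => fderiv ℝ g w v) z u := by
  have hd : DifferentiableAt ℝ (fderiv ℝ g) z :=
    (hg.fderiv_right (m := 1) (le_refl 2)).differentiableAt one_ne_zero
  rw [fderiv_clm_apply hd (differentiableAt_const u),
      fderiv_clm_apply hd (differentiableAt_const v)]
  simp
  exact (hg.isSymmSndFDerivAt (by simp [minSmoothness_of_isRCLikeNormedField])) v u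

lemma Wop_diff {g : SFun} {z : ℂ × ℂ} (hg : ContDiffAt ℝ 2 g z) (a b : ℂ × ℂ) (e : ℂ) :
    DifferentiableAt ℝ (Wop a b e g) z := by
  unfold Wop
  exact (((fderiv_app_diff hg a).add ((fderiv_app_diff hg b).const_mul e)).const_mul _)

lemma Wop_smul {h : SFun} {z : ℂ × ℂ} (hd : DifferentiableAt ℝ h z) (c : ℂ)
    (a b : ℂ × ℂ) (e : ℂ) :
    Wop a b e (fun w => c * h w) z = c * Wop a b e h z := by
  simp [Wop, fderiv_const_mul hd]; ring

lemma Wop_congr {h1 h2 : SFun} {z : ℂ × ℂ} (h : h1 =ᶠ[nhds z] h2)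
    (a b : ℂ × ℂ) (e : ℂ) : Wop a b e h1 z = Wop a b e h2 z := by
  simp [Wop, h.fderiv_eq]

lemma Wop_comm {g : SFun} {z : ℂ × ℂ} (hg : ContDiffAt ℝ 2 g z)
    (a b : ℂ × ℂ) (e : ℂ) (a' b' : ℂ × ℂ) (e' : ℂ) :
    Wop a b e (Wop a' b' e' g) z = Wop a' b' e' (Wop a b e g) z := by
  have hA : ∀ u, DifferentiableAt ℝ (fun w => fderiv ℝ g w u) z := fderiv_app_diff hg
  have key : ∀ (c d : ℂ × ℂ) (e'' : ℂ) (v : ℂ × ℂ),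
      fderiv ℝ (Wop c d e'' g) z v
        = (1/2) * (fderiv ℝ (fun w => fderiv ℝ g w c) z v
            + e'' * fderiv ℝ (fun w => fderiv ℝ g w d) z v) := by
    intro c d e'' v
    unfold Wop
    rw [fderiv_const_mul ((hA c).fun_add ((hA d).const_mul e'')),
        fderiv_fun_add (hA c) ((hA d).const_mul e''), fderiv_const_mul (hA d)]
    simp
    ring
  show (1/2) * (fderiv ℝ (Wop a' b' e' g) z a + e * fderiv ℝ (Wop a' b' e' g) z b)
      = (1/2) * (fderiv ℝ (Wop a b e g) z a' + e' * fderiv ℝ (Wop a b e g) z b')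
  rw [key, key, key, key, swap2 hg a' a, swap2 hg b' a, swap2 hg a' b, swap2 hg b' b]
  ring


@[simp] lemma vec6_0 {α} (a0 a1 a2 a3 a4 a5 : α) : ![a0,a1,a2,a3,a4,a5] 0 = a0 := rfl
@[simp] lemma vec6_1 {α} (a0 a1 a2 a3 a4 a5 : α) : ![a0,a1,a2,a3,a4,a5] 1 = a1 := rfl
@[simp] lemma vec6_2 {α} (a0 a1 a2 a3 a4 a5 : α) : ![a0,a1,a2,a3,a4,a5] 2 = a2 := rfl
@[simp] lemma vec6_3 {α} (a0 a1 a2 a3 a4 a5 : α) : ![a0,a1,a2,a3,a4,a5] 3 = a3 := rfl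
@[simp] lemma vec6_4 {α} (a0 a1 a2 a3 a4 a5 : α) : ![a0,a1,a2,a3,a4,a5] 4 = a4 := rfl
@[simp] lemma vec6_5 {α} (a0 a1 a2 a3 a4 a5 : α) : ![a0,a1,a2,a3,a4,a5] 5 = a5 := rfl
@[simp] lemma vec4_0 {α} (a0 a1 a2 a3 : α) : ![a0,a1,a2,a3] 0 = a0 := rfl
@[simp] lemma vec4_1 {α} (a0 a1 a2 a3 : α) : ![a0,a1,a2,a3] 1 = a1 := rfl
@[simp] lemma vec4_2 {α} (a0 a1 a2 a3 : α) : ![a0,a1,a2,a3] 2 = a2 := rfl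
@[simp] lemma vec4_3 {α} (a0 a1 a2 a3 : α) : ![a0,a1,a2,a3] 3 = a3 := rfl


@[simp] lemma vec4_mk0 {α} (a0 a1 a2 a3 : α) (h : 0 < 4) : ![a0,a1,a2,a3] ⟨0,h⟩ = a0 := rfl
@[simp] lemma vec4_mk1 {α} (a0 a1 a2 a3 : α) (h : 1 < 4) : ![a0,a1,a2,a3] ⟨1,h⟩ = a1 := rfl
@[simp] lemma vec4_mk2 {α} (a0 a1 a2 a3 : α) (h : 2 < 4) : ![a0,a1,a2,a3] ⟨2,h⟩ = a2 := rfl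
@[simp] lemma vec4_mk3 {α} (a0 a1 a2 a3 : α) (h : 3 < 4) : ![a0,a1,a2,a3] ⟨3,h⟩ = a3 := rfl
@[simp] lemma vec6_mk0 {α} (a0 a1 a2 a3 a4 a5 : α) (h : 0 < 6) : ![a0,a1,a2,a3,a4,a5] ⟨0,h⟩ = a0 := rfl
@[simp] lemma vec6_mk1 {α} (a0 a1 a2 a3 a4 a5 : α) (h : 1 < 6) : ![a0,a1,a2,a3,a4,a5] ⟨1,h⟩ = a1 := rfl
@[simp] lemma vec6_mk2 {α} (a0 a1 a2 a3 a4 a5 : α) (h : 2 < 6) : ![a0,a1,a2,a3,a4,a5] ⟨2,h⟩ = a2 := rfl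
@[simp] lemma vec6_mk3 {α} (a0 a1 a2 a3 a4 a5 : α) (h : 3 < 6) : ![a0,a1,a2,a3,a4,a5] ⟨3,h⟩ = a3 := rfl
@[simp] lemma vec6_mk4 {α} (a0 a1 a2 a3 a4 a5 : α) (h : 4 < 6) : ![a0,a1,a2,a3,a4,a5] ⟨4,h⟩ = a4 := rfl
@[simp] lemma vec6_mk5 {α} (a0 a1 a2 a3 a4 a5 : α) (h : 5 < 6) : ![a0,a1,a2,a3,a4,a5] ⟨5,h⟩ = a5 := rfl

lemma dc2_diag (φ : SFun) :
    dc2 ![fun _ => 0, φ, fun _ => 0, fun _ => 0, φ, fun _ => 0] =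
    ![fun w => Complex.I * wr2 φ w, fun w => -Complex.I * wr1 φ w,
      fun w => Complex.I * wb2 φ w, fun w => -Complex.I * wb1 φ w] := by
  funext i w
  fin_cases i <;>
    simp [dc2, wr1_def, wr2_def, wb1_def, wb2_def, Wop_zero, vec6_0, vec6_1, vec6_2, vec6_3, vec6_4, vec6_5, vec4_0, vec4_1, vec4_2, vec4_3, vec4_mk0, vec4_mk1, vec4_mk2, vec4_mk3, vec6_mk0, vec6_mk1, vec6_mk2, vec6_mk3, vec6_mk4, vec6_mk5] <;> ring

set_option maxHeartbeats 2000000 in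
theorem twisted_CalabiYau_of_harmonic_conformal_factor
    (X : Set (ℂ × ℂ)) (hX : IsOpen X)
    (f : ℂ × ℂ → ℝ) (hf : ContDiffOn ℝ (⊤ : ℕ∞) f X) (hfpos : ∀ z ∈ X, 0 < f z)
    -- f is harmonic for the flat metric: Δ_{ω₀} f = 0
    (hharm : ∀ z ∈ X,
      wr1 (wb1 (fun w => (f w : ℂ))) z + wr2 (wb2 (fun w => (f w : ℂ))) z = 0) :
    -- ω = f ω₀, Ψ = f Ψ₀, θ = d log f:
    (fun (Omega Psi PsiBar : Fin 6 → SFun) (theta : Fin 4 → SFun) =>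
      -- SU(2)-structure: Ψ ∧ ω = 0 and Ψ ∧ Ψ̄ = ω²/2
      ((∀ z ∈ X, wedge22 Psi Omega z = 0) ∧
       (∀ z ∈ X, wedge22 Psi PsiBar z = wedge22 Omega Omega z / 2)) ∧
      -- the Lee form is θ_ω = d log f, i.e. dω = θ ∧ ω
      (∀ i, ∀ z ∈ X, extd2 Omega i z = wedge12 theta Omega i z) ∧
      -- twisted Calabi–Yau equations:
      (∀ i, ∀ z ∈ X, extd2 Psi i z - wedge12 theta Psi i z = 0) ∧   -- dΨ − θ∧Ψ = 0
      (∀ i, ∀ z ∈ X, extd1 theta i z = 0) ∧                          -- dθ = 0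
      (∀ z ∈ X, extd3 (dc2 Omega) z = 0))                             -- dd^cω = 0
    -- ω = (i/2)(f dz₁∧dz̄₁ + f dz₂∧dz̄₂)
    ![fun _ => 0, fun z => (Complex.I / 2) * (f z : ℂ), fun _ => 0, fun _ => 0,
      fun z => (Complex.I / 2) * (f z : ℂ), fun _ => 0]
    -- Ψ = (f/2) dz₁∧dz₂
    ![fun z => (f z : ℂ) / 2, fun _ => 0, fun _ => 0, fun _ => 0, fun _ => 0, fun _ => 0]
    -- Ψ̄ = conj(f/2) dz̄₁∧dz̄₂
    ![fun _ => 0, fun _ => 0, fun _ => 0, fun _ => 0, fun _ => 0,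
      fun z => (starRingEnd ℂ) ((f z : ℂ) / 2)]
    -- θ = d log f
    (extd0 (fun w => (Real.log (f w) : ℂ))) := by
  -- basic smoothness facts
  have hFsm : ∀ z ∈ X, ContDiffAt ℝ 2 (fun w => ((f w : ℝ) : ℂ)) z := by
    intro z hz
    exact (Complex.ofRealCLM.contDiff.contDiffAt.comp z
      ((hf.contDiffAt (hX.mem_nhds hz)).of_le (WithTop.coe_le_coe.mpr le_top)))
  have hFd : ∀ z ∈ X, DifferentiableAt ℝ (fun w => ((f w : ℝ) : ℂ)) z :=
    fun z hz => (hFsm z hz).differentiableAt two_ne_zero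
  have hgsm : ∀ z ∈ X, ContDiffAt ℝ 2 (fun w => ((Real.log (f w) : ℝ) : ℂ)) z := by
    intro z hz
    exact (Complex.ofRealCLM.contDiff.contDiffAt.comp z
      (((hf.contDiffAt (hX.mem_nhds hz)).log (ne_of_gt (hfpos z hz))).of_le (WithTop.coe_le_coe.mpr le_top)))
  have hchain : ∀ z ∈ X, ∀ v, fderiv ℝ (fun w => ((Real.log (f w) : ℝ) : ℂ)) z v
      = ((f z : ℂ))⁻¹ * fderiv ℝ (fun w => ((f w : ℝ) : ℂ)) z v := by
    intro z hz v
    have hdf : DifferentiableAt ℝ f z :=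
      (hf.contDiffAt (hX.mem_nhds hz)).differentiableAt (by simp)
    have hlog : HasFDerivAt (fun w => Real.log (f w)) ((f z)⁻¹ • fderiv ℝ f z) z :=
      hdf.hasFDerivAt.log (ne_of_gt (hfpos z hz))
    have hg' : HasFDerivAt (fun w => ((Real.log (f w) : ℝ) : ℂ))
        (Complex.ofRealCLM.comp ((f z)⁻¹ • fderiv ℝ f z)) z :=
      Complex.ofRealCLM.hasFDerivAt.comp z hlog
    have hF' : HasFDerivAt (fun w => ((f w : ℝ) : ℂ))
        (Complex.ofRealCLM.comp (fderiv ℝ f z)) z :=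
      Complex.ofRealCLM.hasFDerivAt.comp z hdf.hasFDerivAt
    rw [hg'.fderiv, hF'.fderiv]
    simp
    try push_cast
    try ring
  refine ⟨⟨?_, ?_⟩, ?_, ?_, ?_, ?_⟩
  · -- Ψ ∧ ω = 0
    intro z hz
    simp only [wedge22, vec6_0, vec6_1, vec6_2, vec6_3, vec6_4, vec6_5, vec4_0, vec4_1, vec4_2, vec4_3, vec4_mk0, vec4_mk1, vec4_mk2, vec4_mk3, vec6_mk0, vec6_mk1, vec6_mk2, vec6_mk3, vec6_mk4, vec6_mk5]
    ring
  · -- Ψ ∧ Ψ̄ = ω²/2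
    intro z hz
    simp only [wedge22, vec6_0, vec6_1, vec6_2, vec6_3, vec6_4, vec6_5, vec4_0, vec4_1, vec4_2, vec4_3, vec4_mk0, vec4_mk1, vec4_mk2, vec4_mk3, vec6_mk0, vec6_mk1, vec6_mk2, vec6_mk3, vec6_mk4, vec6_mk5, map_div₀, Complex.conj_ofReal, Complex.conj_I]
    have h2 : (starRingEnd ℂ) 2 = 2 := map_ofNat _ 2
    rw [h2]
    linear_combination ((f z:ℂ)^2/4) * Complex.I_sq
  · -- dω = θ ∧ ω
    intro i z hz
    have hfz : ((f z : ℝ) : ℂ) ≠ 0 := Complex.ofReal_ne_zero.mpr (ne_of_gt (hfpos z hz))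
    have hWc : ∀ (c : ℂ) (a b : ℂ × ℂ) (e : ℂ),
        Wop a b e (fun w => c * ((f w : ℝ) : ℂ)) z
          = c * Wop a b e (fun w => ((f w : ℝ) : ℂ)) z :=
      fun c a b e => Wop_smul (hFd z hz) c a b e
    have hWg : ∀ (a b : ℂ × ℂ) (e : ℂ),
        Wop a b e (fun w => ((Real.log (f w) : ℝ) : ℂ)) z
          = ((f z : ℂ))⁻¹ * Wop a b e (fun w => ((f w : ℝ) : ℂ)) z := by
      intro a b e
      unfold Wop
      rw [hchain z hz, hchain z hz]
      ring
    have hdiv : (fun w => ((f w : ℝ) : ℂ) / 2) = (fun w => (2 : ℂ)⁻¹ * ((f w : ℝ) : ℂ)) := by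
      funext w; ring
    fin_cases i <;>
    · simp only [extd2, wedge12, extd0, hdiv, vec6_0, vec6_1, vec6_2, vec6_3, vec6_4, vec6_5, vec4_0, vec4_1, vec4_2, vec4_3, vec4_mk0, vec4_mk1, vec4_mk2, vec4_mk3, vec6_mk0, vec6_mk1, vec6_mk2, vec6_mk3, vec6_mk4, vec6_mk5,
        wr1_def, wr2_def, wb1_def, wb2_def, Wop_zero, hWc, hWg]
      try field_simp
      try ring
  · -- dΨ − θ ∧ Ψ = 0
    intro i z hz
    have hfz : ((f z : ℝ) : ℂ) ≠ 0 := Complex.ofReal_ne_zero.mpr (ne_of_gt (hfpos z hz))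
    have hWc : ∀ (c : ℂ) (a b : ℂ × ℂ) (e : ℂ),
        Wop a b e (fun w => c * ((f w : ℝ) : ℂ)) z
          = c * Wop a b e (fun w => ((f w : ℝ) : ℂ)) z :=
      fun c a b e => Wop_smul (hFd z hz) c a b e
    have hWg : ∀ (a b : ℂ × ℂ) (e : ℂ),
        Wop a b e (fun w => ((Real.log (f w) : ℝ) : ℂ)) z
          = ((f z : ℂ))⁻¹ * Wop a b e (fun w => ((f w : ℝ) : ℂ)) z := by
      intro a b e
      unfold Wop
      rw [hchain z hz, hchain z hz]
      ring
    have hdiv : (fun w => ((f w : ℝ) : ℂ) / 2) = (fun w => (2 : ℂ)⁻¹ * ((f w : ℝ) : ℂ)) := by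
      funext w; ring
    fin_cases i <;>
    · simp only [extd2, wedge12, extd0, hdiv, vec6_0, vec6_1, vec6_2, vec6_3, vec6_4, vec6_5, vec4_0, vec4_1, vec4_2, vec4_3, vec4_mk0, vec4_mk1, vec4_mk2, vec4_mk3, vec6_mk0, vec6_mk1, vec6_mk2, vec6_mk3, vec6_mk4, vec6_mk5,
        wr1_def, wr2_def, wb1_def, wb2_def, Wop_zero, hWc, hWg]
      try field_simp
      try ring
  · -- dθ = 0
    intro i z hz
    have hg2 := hgsm z hz
    fin_cases i <;>
    · simp only [extd1, extd0, vec6_0, vec6_1, vec6_2, vec6_3, vec6_4, vec6_5, vec4_0, vec4_1, vec4_2, vec4_3, vec4_mk0, vec4_mk1, vec4_mk2, vec4_mk3, vec6_mk0, vec6_mk1, vec6_mk2, vec6_mk3, vec6_mk4, vec6_mk5, wr1_def, wr2_def, wb1_def, wb2_def]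
      rw [Wop_comm hg2]
      ring
  · -- dd^c ω = 0
    intro z hz
    have hF2 := hFsm z hz
    have hinner : ∀ (a b : ℂ × ℂ) (e : ℂ) (a' b' : ℂ × ℂ) (e' : ℂ) (c : ℂ),
        Wop a b e (fun w => c * Wop a' b' e' (fun w' => Complex.I / 2 * ((f w' : ℝ) : ℂ)) w) z
          = (c * (Complex.I / 2)) * Wop a b e (Wop a' b' e' (fun w' => ((f w' : ℝ) : ℂ))) z := by
      intro a b e a' b' e' c
      have hEq : (fun w => c * Wop a' b' e' (fun w' => Complex.I / 2 * ((f w' : ℝ) : ℂ)) w)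
          =ᶠ[nhds z] (fun w => (c * (Complex.I / 2)) * Wop a' b' e' (fun w' => ((f w' : ℝ) : ℂ)) w) := by
        filter_upwards [hX.mem_nhds hz] with w hw
        rw [Wop_smul (hFd w hw)]
        ring
      rw [Wop_congr hEq, Wop_smul (Wop_diff hF2 a' b' e') (c * (Complex.I / 2))]
    have hh := hharm z hz
    rw [wr1_def, wr2_def, wb1_def, wb2_def] at hh
    rw [dc2_diag]
    simp only [extd3, vec6_0, vec6_1, vec6_2, vec6_3, vec6_4, vec6_5, vec4_0, vec4_1, vec4_2, vec4_3, vec4_mk0, vec4_mk1, vec4_mk2, vec4_mk3, vec6_mk0, vec6_mk1, vec6_mk2, vec6_mk3, vec6_mk4, vec6_mk5, wr1_def, wr2_def, wb1_def, wb2_def, hinner]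
    rw [Wop_comm hF2 (0,1) (0,Complex.I) Complex.I (0,1) (0,Complex.I) (-Complex.I),
        Wop_comm hF2 (1,0) (Complex.I,0) Complex.I (1,0) (Complex.I,0) (-Complex.I)]
    linear_combination (-Complex.I^2) * hh
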